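/- (Weak comparison principle.) Let d ≥ 1, p ∈ (1,∞), s ∈ (0,1), let Ω ⊂ ℝ^d be open and bounded, λ > 0, r ∈ [1,∞] with conjugate exponent r′, and let g : ℝ → ℝ be nondecreasing. Let u, v ∈ L^r(Ω) ∩ W^{s,p}_0(Ω) be such that g∘u, g∘v ∈ L^{r′}(Ω) and for every nonnegative φ ∈ L^r(Ω) ∩ W^{s,p}_0(Ω): ∫_Ω g(u)φ dx + λ E(u,φ) ≤ ∫_Ω g(v)φ dx + λ E(v,φ). Then u ≤ v a.e. in Ω. -/

import Mathlib

/-! Test the inequality with `φ = (u - v)⁺`. Since `g` is nondecreasing, `∫ g(v) φ ≤ ∫ g(u) φ`,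
hence `E(u, φ) ≤ E(v, φ)`. On the other hand, as `⟦·⟧^{p-1}` is strictly increasing, the integrand
of `E(u, φ) - E(v, φ)` is nonnegative and vanishes only where `φ(x) = φ(y)`. So `φ` is a.e.
constant on `ℝ^d`, and since it vanishes off the bounded set `Ω`, `φ = 0` a.e. -/

open MeasureTheory ENNReal

/-- Signed power: `spow r x = |x|^(r-1) * x`. -/
noncomputable def spow (r x : ℝ) : ℝ := |x| ^ (r - 1) * x

/-- Fractional p-Laplacian pairing
`E(u,φ) = ∫∫ ⟦u(x)−u(y)⟧^{p−1}(φ(x)−φ(y)) |x−y|^{−(d+sp)} dx dy`. -/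
noncomputable def fracPairing (d : ℕ) (s p : ℝ)
    (u φ : EuclideanSpace ℝ (Fin d) → ℝ) : ℝ :=
  ∫ z : EuclideanSpace ℝ (Fin d) × EuclideanSpace ℝ (Fin d),
    spow (p - 1) (u z.1 - u z.2) * (φ z.1 - φ z.2) / ‖z.1 - z.2‖ ^ ((d : ℝ) + s * p)

/-- Gagliardo seminorm to the `p`-th power, as an extended nonnegative real. -/
noncomputable def gagliardo (d : ℕ) (s p : ℝ)
    (u : EuclideanSpace ℝ (Fin d) → ℝ) : ℝ≥0∞ :=
  ∫⁻ z : EuclideanSpace ℝ (Fin d) × EuclideanSpace ℝ (Fin d),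
    ENNReal.ofReal (|u z.1 - u z.2| ^ p / ‖z.1 - z.2‖ ^ ((d : ℝ) + s * p))

/-- Membership in `W^{s,p}_0(Ω)`. -/
def memW0 (d : ℕ) (s p : ℝ) (Ω : Set (EuclideanSpace ℝ (Fin d)))
    (u : EuclideanSpace ℝ (Fin d) → ℝ) : Prop :=
  Measurable u ∧ MemLp u (ENNReal.ofReal p) volume ∧
    gagliardo d s p u < ⊤ ∧ ∀ᵐ x, x ∉ Ω → u x = 0

lemma spow_of_nonneg {q x : ℝ} (hq : 0 < q) (hx : 0 ≤ x) : spow q x = x ^ q := by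
  rw [spow, abs_of_nonneg hx, ← Real.rpow_add_one' hx (by linarith), sub_add_cancel]

lemma spow_neg (q x : ℝ) : spow q (-x) = -spow q x := by
  rw [spow, spow, abs_neg, mul_neg]

lemma abs_spow {q : ℝ} (hq : 0 < q) (x : ℝ) : |spow q x| = |x| ^ q := by
  rw [spow, abs_mul, abs_of_nonneg (Real.rpow_nonneg (abs_nonneg x) _),
    ← spow_of_nonneg hq (abs_nonneg x), spow, abs_abs]

lemma spow_strictMono {q : ℝ} (hq : 0 < q) : StrictMono (spow q) :=
  strictMono_of_odd_strictMonoOn_nonneg (spow_neg q) <|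
    (Real.strictMonoOn_rpow_Ici_of_exponent_pos hq).congr fun _ hx => (spow_of_nonneg hq hx).symm

lemma measurable_spow (q : ℝ) : Measurable (spow q) :=
  (measurable_id.abs.pow measurable_const).mul measurable_id

lemma rpow_sub_one_mul_le_rpow_add_rpow {p a c : ℝ} (hp : 1 ≤ p) (ha : 0 ≤ a) (hc : 0 ≤ c) :
    a ^ (p - 1) * c ≤ a ^ p + c ^ p := by
  have hsucc : ∀ x : ℝ, 0 ≤ x → x ^ (p - 1) * x = x ^ p := fun x hx => by
    rw [← Real.rpow_add_one' hx (by linarith), sub_add_cancel]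
  rcases le_total c a with h | h
  · calc a ^ (p - 1) * c ≤ a ^ (p - 1) * a := by gcongr
      _ ≤ a ^ p + c ^ p := by rw [hsucc a ha]; exact le_add_of_nonneg_right (by positivity)
  · calc a ^ (p - 1) * c ≤ c ^ (p - 1) * c := by gcongr
      _ ≤ a ^ p + c ^ p := by rw [hsucc c hc]; exact le_add_of_nonneg_left (by positivity)

lemma abs_sub_rpow_le {p : ℝ} (hp : 0 ≤ p) (a b : ℝ) :
    |a - b| ^ p ≤ 2 ^ p * (|a| ^ p + |b| ^ p) :=
  calc |a - b| ^ p ≤ (2 * max |a| |b|) ^ p := by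
        gcongr
        exact (abs_sub a b).trans (by rw [two_mul]; gcongr <;> simp)
    _ = 2 ^ p * max |a| |b| ^ p := Real.mul_rpow (by norm_num) (by positivity)
    _ ≤ 2 ^ p * (|a| ^ p + |b| ^ p) := by
        have := Real.rpow_nonneg (abs_nonneg a) p
        have := Real.rpow_nonneg (abs_nonneg b) p
        gcongr
        rcases max_choice |a| |b| with h | h <;> rw [h] <;> linarith

lemma lt_of_max_zero_lt {a b : ℝ} (h : max a 0 < max b 0) : a < b :=
  (monotone_id.max monotone_const).reflect_lt h

lemma Monotone.mul_max_sub_zero_le {g : ℝ → ℝ} (hg : Monotone g) (a b : ℝ) :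
    g b * max (a - b) 0 ≤ g a * max (a - b) 0 := by
  rcases le_total a b with h | h
  · simp [max_eq_right (sub_nonpos.2 h)]
  · exact mul_le_mul_of_nonneg_right (hg h) (le_max_right _ _)

lemma mul_max_sub_zero_sub_pos {f : ℝ → ℝ} (hf : StrictMono f) {a b a' b' : ℝ}
    (h : max (a - a') 0 ≠ max (b - b') 0) :
    0 < (f (a - b) - f (a' - b')) * (max (a - a') 0 - max (b - b') 0) := by
  rcases h.lt_or_gt with hlt | hgt
  · have : a - b < a' - b' := by linarith [lt_of_max_zero_lt hlt]
    exact mul_pos_of_neg_of_neg (sub_neg.2 (hf this)) (sub_neg.2 hlt)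
  · have : a' - b' < a - b := by linarith [lt_of_max_zero_lt hgt]
    exact mul_pos (sub_pos.2 (hf this)) (sub_pos.2 hgt)

lemma ae_eq_of_ae_prod_eq {α β : Type*} [MeasurableSpace α] {μ : Measure α} [SFinite μ]
    {f : α → β} {S : Set α} {c : β} (hS : μ S ≠ 0) (hfS : ∀ᵐ x ∂μ, x ∈ S → f x = c)
    (h : ∀ᵐ z ∂μ.prod μ, f z.1 = f z.2) : ∀ᵐ x ∂μ, f x = c := by
  filter_upwards [Measure.ae_ae_of_ae_prod h] with x hx
  obtain ⟨y, hyS, hxy, hy⟩ :=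
    Measure.exists_mem_of_measure_ne_zero_of_ae hS (ae_restrict_of_ae (hx.and hfS))
  exact hxy.trans (hy hyS)

lemma measure_compl_ne_zero_of_isBounded {E : Type*} [NormedAddCommGroup E] [NormedSpace ℝ E]
    [FiniteDimensional ℝ E] [Nontrivial E] [MeasurableSpace E] [BorelSpace E] (μ : Measure E)
    [μ.IsAddHaarMeasure] {s : Set E} (hs : Bornology.IsBounded s) : μ sᶜ ≠ 0 := by
  intro hcompl
  have hle := measure_union_le (μ := μ) s sᶜ
  rw [Set.union_compl_self, measure_univ_of_isAddLeftInvariant, hcompl, add_zero] at hle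
  exact hs.measure_lt_top.ne (top_le_iff.1 hle)

section Gagliardo

variable {d : ℕ} {s p : ℝ} {u v w φ : EuclideanSpace ℝ (Fin d) → ℝ}

noncomputable def gagliardoIntegrand (d : ℕ) (s p : ℝ) (w : EuclideanSpace ℝ (Fin d) → ℝ)
    (z : EuclideanSpace ℝ (Fin d) × EuclideanSpace ℝ (Fin d)) : ℝ :=
  |w z.1 - w z.2| ^ p / ‖z.1 - z.2‖ ^ ((d : ℝ) + s * p)

lemma gagliardoIntegrand_nonneg (z : EuclideanSpace ℝ (Fin d) × EuclideanSpace ℝ (Fin d)) :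
    0 ≤ gagliardoIntegrand d s p w z := by
  unfold gagliardoIntegrand; positivity

lemma measurable_gagliardoIntegrand (hw : Measurable w) :
    Measurable (gagliardoIntegrand d s p w) :=
  (((hw.comp measurable_fst).sub (hw.comp measurable_snd)).abs.pow measurable_const).div
    ((measurable_fst.sub measurable_snd).norm.pow measurable_const)

lemma gagliardo_lt_top_iff_integrable (hw : Measurable w) :
    gagliardo d s p w < ⊤ ↔ Integrable (gagliardoIntegrand d s p w) := by
  rw [Integrable, hasFiniteIntegral_iff_ofReal (ae_of_all _ gagliardoIntegrand_nonneg)]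
  exact ⟨fun h => ⟨(measurable_gagliardoIntegrand hw).aestronglyMeasurable, h⟩, And.right⟩

lemma gagliardo_le_of_abs_sub_le (hp : 0 ≤ p) (h : ∀ x y, |φ x - φ y| ≤ |w x - w y|) :
    gagliardo d s p φ ≤ gagliardo d s p w :=
  lintegral_mono fun z => ENNReal.ofReal_le_ofReal <|
    div_le_div_of_nonneg_right (Real.rpow_le_rpow (abs_nonneg _) (h z.1 z.2) hp) (by positivity)

lemma gagliardo_sub_lt_top (hp : 0 ≤ p) (hu : Measurable u) (hv : Measurable v)
    (hgu : gagliardo d s p u < ⊤) (hgv : gagliardo d s p v < ⊤) :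
    gagliardo d s p (u - v) < ⊤ := by
  rw [gagliardo_lt_top_iff_integrable hu] at hgu
  rw [gagliardo_lt_top_iff_integrable hv] at hgv
  rw [gagliardo_lt_top_iff_integrable (hu.sub hv)]
  refine ((hgu.add hgv).const_mul (2 ^ p)).mono'
    (measurable_gagliardoIntegrand (hu.sub hv)).aestronglyMeasurable (ae_of_all _ fun z => ?_)
  rw [Real.norm_of_nonneg (gagliardoIntegrand_nonneg z)]
  simp only [gagliardoIntegrand, Pi.add_apply, Pi.sub_apply, ← add_div, ← mul_div_assoc]
  gcongr
  rw [sub_sub_sub_comm]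
  exact abs_sub_rpow_le hp _ _

lemma gagliardo_max_sub_zero_lt_top (hp : 0 ≤ p) (hu : Measurable u) (hv : Measurable v)
    (hgu : gagliardo d s p u < ⊤) (hgv : gagliardo d s p v < ⊤) :
    gagliardo d s p (fun x => max (u x - v x) 0) < ⊤ :=
  (gagliardo_le_of_abs_sub_le hp fun _ _ => abs_max_sub_max_le_abs _ _ _).trans_lt
    (gagliardo_sub_lt_top hp hu hv hgu hgv)

lemma memW0_max_sub_zero {Ω : Set (EuclideanSpace ℝ (Fin d))} (hp : 0 ≤ p)
    (hu : memW0 d s p Ω u) (hv : memW0 d s p Ω v) :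
    memW0 d s p Ω fun x => max (u x - v x) 0 := by
  obtain ⟨hum, hup, hug, huz⟩ := hu
  obtain ⟨hvm, hvp, hvg, hvz⟩ := hv
  refine ⟨(hum.sub hvm).max measurable_const, (hup.sub hvp).pos_part,
    gagliardo_max_sub_zero_lt_top hp hum hvm hug hvg, ?_⟩
  filter_upwards [huz, hvz] with x hux hvx hx
  simp [hux hx, hvx hx]

lemma integrable_fracPairing_integrand (hp : 1 < p) (hw : Measurable w) (hφ : Measurable φ)
    (hgw : gagliardo d s p w < ⊤) (hgφ : gagliardo d s p φ < ⊤) :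
    Integrable fun z : EuclideanSpace ℝ (Fin d) × EuclideanSpace ℝ (Fin d) =>
      spow (p - 1) (w z.1 - w z.2) * (φ z.1 - φ z.2) / ‖z.1 - z.2‖ ^ ((d : ℝ) + s * p) := by
  rw [gagliardo_lt_top_iff_integrable hw] at hgw
  rw [gagliardo_lt_top_iff_integrable hφ] at hgφ
  refine (hgw.add hgφ).mono' ?_ (ae_of_all _ fun z => ?_)
  · exact ((((measurable_spow _).comp ((hw.comp measurable_fst).sub (hw.comp measurable_snd))).mul
      ((hφ.comp measurable_fst).sub (hφ.comp measurable_snd))).div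
      ((measurable_fst.sub measurable_snd).norm.pow measurable_const)).aestronglyMeasurable
  · rw [Real.norm_eq_abs, abs_div, abs_mul, abs_spow (by linarith),
      abs_of_nonneg (by positivity : (0 : ℝ) ≤ ‖z.1 - z.2‖ ^ ((d : ℝ) + s * p))]
    simp only [gagliardoIntegrand, Pi.add_apply, ← add_div]
    gcongr
    exact rpow_sub_one_mul_le_rpow_add_rpow hp.le (abs_nonneg _) (abs_nonneg _)

lemma ae_max_sub_zero_eq_of_fracPairing_le (hp : 1 < p) (hu : Measurable u) (hv : Measurable v)
    (hgu : gagliardo d s p u < ⊤) (hgv : gagliardo d s p v < ⊤)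
    (h : fracPairing d s p u (fun x => max (u x - v x) 0) ≤
      fracPairing d s p v (fun x => max (u x - v x) 0)) :
    ∀ᵐ z : EuclideanSpace ℝ (Fin d) × EuclideanSpace ℝ (Fin d),
      max (u z.1 - v z.1) 0 = max (u z.2 - v z.2) 0 := by
  set φ := fun x => max (u x - v x) 0
  have hφ : Measurable φ := (hu.sub hv).max measurable_const
  have hgφ := gagliardo_max_sub_zero_lt_top (by linarith) hu hv hgu hgv
  have hmono := spow_strictMono (sub_pos.2 hp)
  have hIu := integrable_fracPairing_integrand hp hu hφ hgu hgφ
  have hIv := integrable_fracPairing_integrand hp hv hφ hgv hgφ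
  set D := fun z : EuclideanSpace ℝ (Fin d) × EuclideanSpace ℝ (Fin d) =>
    (spow (p - 1) (u z.1 - u z.2) - spow (p - 1) (v z.1 - v z.2)) * (φ z.1 - φ z.2) /
      ‖z.1 - z.2‖ ^ ((d : ℝ) + s * p)
  have hD_int : Integrable D := (hIu.sub hIv).congr <| ae_of_all _ fun z => by
    simp only [D, Pi.sub_apply]
    ring
  have hD_integral : ∫ z, D z = fracPairing d s p u φ - fracPairing d s p v φ := by
    rw [fracPairing, fracPairing, ← integral_sub hIu hIv]
    congr 1 with z
    ring
  have hD_nonneg : 0 ≤ D := fun z => by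
    refine div_nonneg ?_ (by positivity)
    rcases eq_or_ne (φ z.1) (φ z.2) with he | hne
    · rw [he, sub_self, mul_zero]
    · exact (mul_max_sub_zero_sub_pos hmono hne).le
  have hD_zero : D =ᵐ[volume] 0 := (integral_eq_zero_iff_of_nonneg hD_nonneg hD_int).1 <|
    le_antisymm (by linarith) (integral_nonneg hD_nonneg)
  filter_upwards [hD_zero] with z hDz
  by_contra hne
  have hz : z.1 - z.2 ≠ 0 := sub_ne_zero.2 fun heq => hne (by rw [heq])
  exact (div_pos (mul_max_sub_zero_sub_pos hmono hne)
    (Real.rpow_pos_of_pos (norm_pos_iff.2 hz) _)).ne' hDz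

end Gagliardo

theorem stmt2_general (d : ℕ) (hd : 1 ≤ d) (p s : ℝ) (hp : 1 < p)
    (Ω : Set (EuclideanSpace ℝ (Fin d))) (hΩb : Bornology.IsBounded Ω)
    (lam : ℝ) (hlam : 0 < lam) (r r' : ℝ≥0∞) (hrr' : 1 / r + 1 / r' = 1)
    (g : ℝ → ℝ) (hg : Monotone g)
    (u v : EuclideanSpace ℝ (Fin d) → ℝ)
    (hu : MemLp u r (volume.restrict Ω) ∧ memW0 d s p Ω u)
    (hv : MemLp v r (volume.restrict Ω) ∧ memW0 d s p Ω v)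
    (hgu : MemLp (fun x => g (u x)) r' (volume.restrict Ω))
    (hgv : MemLp (fun x => g (v x)) r' (volume.restrict Ω))
    (hcomp : ∀ φ : EuclideanSpace ℝ (Fin d) → ℝ,
      MemLp φ r (volume.restrict Ω) → memW0 d s p Ω φ → (∀ x, 0 ≤ φ x) →
      (∫ x in Ω, g (u x) * φ x) + lam * fracPairing d s p u φ ≤
        (∫ x in Ω, g (v x) * φ x) + lam * fracPairing d s p v φ) :
    ∀ᵐ x ∂(volume.restrict Ω), u x ≤ v x := by
  obtain ⟨hur, huW⟩ := hu
  obtain ⟨hvr, hvW⟩ := hv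
  set φ := fun x => max (u x - v x) 0
  have hφr : MemLp φ r (volume.restrict Ω) := (hur.sub hvr).pos_part
  have hφW : memW0 d s p Ω φ := memW0_max_sub_zero (by linarith) huW hvW
  have : ENNReal.HolderTriple r' r 1 := ⟨by simpa [one_div, add_comm] using hrr'⟩
  have hg_term : ∫ x in Ω, g (v x) * φ x ≤ ∫ x in Ω, g (u x) * φ x :=
    integral_mono (hgv.integrable_mul hφr) (hgu.integrable_mul hφr) fun x =>
      hg.mul_max_sub_zero_le (u x) (v x)
  have hpairing : fracPairing d s p u φ ≤ fracPairing d s p v φ := by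
    have := hcomp φ hφr hφW fun x => le_max_right _ _
    exact le_of_mul_le_mul_left (by linarith) hlam
  have hφ_diag := ae_max_sub_zero_eq_of_fracPairing_le hp huW.1 hvW.1 huW.2.2.1 hvW.2.2.1 hpairing
  rw [Measure.volume_eq_prod] at hφ_diag
  have : Nonempty (Fin d) := ⟨⟨0, hd⟩⟩ -- so that `EuclideanSpace ℝ (Fin d)` is nontrivial
  have hφ_zero : ∀ᵐ x, φ x = 0 :=
    ae_eq_of_ae_prod_eq (measure_compl_ne_zero_of_isBounded volume hΩb) hφW.2.2.2 hφ_diag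
  filter_upwards [ae_restrict_of_ae hφ_zero] with x hx
  simpa [φ, sub_nonpos] using hx

/-- weak comparison principle. If `g` is nondecreasing,
`u, v ∈ L^r(Ω) ∩ W^{s,p}_0(Ω)`, `g∘u, g∘v ∈ L^{r′}(Ω)` and for every nonnegative
`φ ∈ L^r(Ω) ∩ W^{s,p}_0(Ω)` one has
`∫_Ω g(u)φ + λ E(u,φ) ≤ ∫_Ω g(v)φ + λ E(v,φ)`, then `u ≤ v` a.e. in `Ω`. -/
theorem stmt2 (d : ℕ) (hd : 1 ≤ d) (p s : ℝ) (hp : 1 < p) (hs : s ∈ Set.Ioo (0 : ℝ) 1)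
    (Ω : Set (EuclideanSpace ℝ (Fin d))) (hΩo : IsOpen Ω) (hΩb : Bornology.IsBounded Ω)
    (lam : ℝ) (hlam : 0 < lam) (r r' : ℝ≥0∞) (hr : 1 ≤ r) (hrr' : 1 / r + 1 / r' = 1)
    (g : ℝ → ℝ) (hg : Monotone g)
    (u v : EuclideanSpace ℝ (Fin d) → ℝ)
    (hu : MemLp u r (volume.restrict Ω) ∧ memW0 d s p Ω u)
    (hv : MemLp v r (volume.restrict Ω) ∧ memW0 d s p Ω v)
    (hgu : MemLp (fun x => g (u x)) r' (volume.restrict Ω))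
    (hgv : MemLp (fun x => g (v x)) r' (volume.restrict Ω))
    (hcomp : ∀ φ : EuclideanSpace ℝ (Fin d) → ℝ,
      MemLp φ r (volume.restrict Ω) → memW0 d s p Ω φ → (∀ x, 0 ≤ φ x) →
      (∫ x in Ω, g (u x) * φ x) + lam * fracPairing d s p u φ ≤
        (∫ x in Ω, g (v x) * φ x) + lam * fracPairing d s p v φ) :
    ∀ᵐ x ∂(volume.restrict Ω), u x ≤ v x :=
  stmt2_general d hd p s hp Ω hΩb lam hlam r r' hrr' g hg u v hu hv hgu hgv hcomp
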